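/- Given a self-similar graph (G, E, φ) with E finite and without sources, the following are equivalent: (1) every G-circuit has an entry; (2) every circuit has an entry. -/
import Mathlib


/-- Finite paths in a directed graph: `Pth.nil x` is the length-zero path at the
vertex `x`, and `Pth.cons e p` is the path whose first edge is `e`, followed by `p`. -/
inductive Pth (V : Type) (Ed : Type) : Type where
  | nil : V → Pth V Ed
  | cons : Ed → Pth V Ed → Pth V Ed

/-- A self-similar graph `(G, E, φ)`: a group `G` acting on a directed graph `E`
(with vertex set `V`, edge set `Ed`, range `r` and source `d`) by graph
automorphisms, together with a one-cocycle `φ : G × E¹ → G` for the action on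
edges, satisfying `φ(g,e)·x = g·x` for all vertices `x`. -/
structure SelfSimGraph (G V Ed : Type) [Group G] : Type where
  r : Ed → V
  d : Ed → V
  actV : G → V → V
  actE : G → Ed → Ed
  actV_one : ∀ x, actV 1 x = x
  actV_mul : ∀ g h x, actV (g * h) x = actV g (actV h x)
  actE_one : ∀ e, actE 1 e = e
  actE_mul : ∀ g h e, actE (g * h) e = actE g (actE h e)
  r_act : ∀ g e, r (actE g e) = actV g (r e)
  d_act : ∀ g e, d (actE g e) = actV g (d e)
  phi : G → Ed → G
  phi_cocycle : ∀ g h e, phi (g * h) e = phi g (actE h e) * phi h e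
  phi_vertex : ∀ g e x, actV (phi g e) x = actV g x

variable {G V Ed : Type} [Group G]

/-- The range `r(α)` of a finite path. -/
def rngP (S : SelfSimGraph G V Ed) : Pth V Ed → V
  | Pth.nil x => x
  | Pth.cons e _ => S.r e

/-- The source `d(α)` of a finite path. -/
def srcP (S : SelfSimGraph G V Ed) : Pth V Ed → V
  | Pth.nil x => x
  | Pth.cons _ p => srcP S p

/-- Well-formedness of a finite path: consecutive edges match, `d(αᵢ) = r(αᵢ₊₁)`. -/
def WFP (S : SelfSimGraph G V Ed) : Pth V Ed → Prop
  | Pth.nil _ => True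
  | Pth.cons e p => S.d e = rngP S p ∧ WFP S p

/-- The length of a finite path. -/
def lenP : Pth V Ed → ℕ
  | Pth.nil _ => 0
  | Pth.cons _ p => lenP p + 1

/-- Concatenation `αβ` of finite paths (meaningful when `d(α) = r(β)`). -/
def compP : Pth V Ed → Pth V Ed → Pth V Ed
  | Pth.nil _, q => q
  | Pth.cons e p, q => Pth.cons e (compP p q)

/-- The action of `G` extended to finite paths:
`g·x = g·x` on vertices and `g·(eα) = (g·e)(φ(g,e)·α)`. -/
def actP (S : SelfSimGraph G V Ed) : G → Pth V Ed → Pth V Ed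
  | g, Pth.nil x => Pth.nil (S.actV g x)
  | g, Pth.cons e p => Pth.cons (S.actE g e) (actP S (S.phi g e) p)

/-- The cocycle extended to finite paths:
`φ(g,x) = g` on vertices and `φ(g, eα) = φ(φ(g,e), α)`. -/
def phiP (S : SelfSimGraph G V Ed) : G → Pth V Ed → G
  | g, Pth.nil _ => g
  | g, Pth.cons e p => phiP S (S.phi g e) p

/-- A path `τ` is strongly fixed by `g` if `g·τ = τ` and `φ(g,τ) = 1`. -/
def StronglyFixed (S : SelfSimGraph G V Ed) (g : G) (τ : Pth V Ed) : Prop :=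
  WFP S τ ∧ actP S g τ = τ ∧ phiP S g τ = 1

/-- `(G,E,φ)` is pseudo free if `g·e = e` and `φ(g,e) = 1` imply `g = 1`. -/
def PseudoFree (S : SelfSimGraph G V Ed) : Prop :=
  ∀ (g : G) (e : Ed), S.actE g e = e → S.phi g e = 1 → g = 1

/-- `p` is a prefix (initial segment) of `q`: `q = pε` for some path `ε`. -/
def IsPrefixP (S : SelfSimGraph G V Ed) (p q : Pth V Ed) : Prop :=
  ∃ ε, WFP S ε ∧ rngP S ε = srcP S p ∧ compP p ε = q

/-- The set `M_g` of minimal strongly fixed paths for `g`: strongly fixed paths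
none of whose proper prefixes is strongly fixed. -/
def MinSF (S : SelfSimGraph G V Ed) (g : G) : Set (Pth V Ed) :=
  {μ | StronglyFixed S g μ ∧ ∀ p, IsPrefixP S p μ → p ≠ μ → ¬StronglyFixed S g p}

/-- Well-formedness of an infinite path, viewed as a sequence of edges:
`d(ξᵢ) = r(ξᵢ₊₁)`. -/
def InfWF (S : SelfSimGraph G V Ed) (ξ : ℕ → Ed) : Prop :=
  ∀ i, S.d (ξ i) = S.r (ξ (i + 1))

/-- The range `r(ξ)` of an infinite path. -/
def rngInf (S : SelfSimGraph G V Ed) (ξ : ℕ → Ed) : V := S.r (ξ 0)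

/-- `takeP S ξ n` is the finite path `ξ|ₙ = ξ₁⋯ξₙ` (with `ξ|₀ = r(ξ₁)`). -/
def takeP (S : SelfSimGraph G V Ed) : (ℕ → Ed) → ℕ → Pth V Ed
  | ξ, 0 => Pth.nil (S.r (ξ 0))
  | ξ, n + 1 => Pth.cons (ξ 0) (takeP S (fun i => ξ (i + 1)) n)

/-- Membership of an infinite path in the cylinder `Z(α)`:
the initial segment of `ξ` of length `|α|` equals `α`. -/
def InZ (S : SelfSimGraph G V Ed) (α : Pth V Ed) (ξ : ℕ → Ed) : Prop :=
  takeP S ξ (lenP α) = α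

/-- The infinite path `αξ` obtained by prepending a finite path to an infinite one. -/
def prepSeq : Pth V Ed → (ℕ → Ed) → ℕ → Ed
  | Pth.nil _, ξ, n => ξ n
  | Pth.cons e _, _, 0 => e
  | Pth.cons _ p, ξ, n + 1 => prepSeq p ξ n

/-- Dropping the first `k` edges of an infinite path. -/
def dropSeq (k : ℕ) (ξ : ℕ → Ed) : ℕ → Ed := fun n => ξ (n + k)

/-- The space `E^∞` of infinite paths. -/
def InfPath (S : SelfSimGraph G V Ed) : Type := {ξ : ℕ → Ed // InfWF S ξ}

/-- The topology of `E^∞`: the subspace topology induced from the product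
topology on `(E¹)^ℕ`, `E¹` being discrete.  Its basis consists of the
cylinders `Z(α)`. -/
def infTop (S : SelfSimGraph G V Ed) : TopologicalSpace (InfPath S) :=
  TopologicalSpace.induced (fun ξ => ξ.1)
    (@Pi.topologicalSpace ℕ (fun _ => Ed) (fun _ => ⊥))

/-- Specification of the (unique) action of `G` on `E^∞`: `(g·ξ)|ₙ = g·(ξ|ₙ)`. -/
def ActSpec (S : SelfSimGraph G V Ed) (act : G → (ℕ → Ed) → ℕ → Ed) : Prop :=
  ∀ (g : G) (ξ : ℕ → Ed) (n : ℕ), takeP S (act g ξ) n = actP S g (takeP S ξ n)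

/-- The action of a triple `s = (α, g, β) ∈ S_{G,E}` on `E^∞`: it sends
`βξ ∈ Z(β)` to `α(g·ξ)`. -/
def sActSeq (S : SelfSimGraph G V Ed) (act : G → (ℕ → Ed) → ℕ → Ed)
    (α : Pth V Ed) (g : G) (β : Pth V Ed) (ξ : ℕ → Ed) : ℕ → Ed :=
  prepSeq α (act g (dropSeq (lenP β) ξ))

/-- The set of fixed points in `E^∞` of the element `s = (α, g, β)` of `S_{G,E}`. -/
def FixSet (S : SelfSimGraph G V Ed) (act : G → (ℕ → Ed) → ℕ → Ed)
    (α : Pth V Ed) (g : G) (β : Pth V Ed) : Set (InfPath S) :=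
  {η | InZ S β η.1 ∧ sActSeq S act α g β η.1 = η.1}

/-- A vertex `x` is simple if `r⁻¹(x)` is a singleton. -/
def SimpleVtx (S : SelfSimGraph G V Ed) (x : V) : Prop := ∃! e : Ed, S.r e = x

/-- A path `γ = γ₁⋯γₙ` has no entry if `d(γᵢ)` is simple for every `i`. -/
def NoEntry (S : SelfSimGraph G V Ed) : Pth V Ed → Prop
  | Pth.nil _ => True
  | Pth.cons e p => SimpleVtx S (S.d e) ∧ NoEntry S p

/-- A circuit: a path `γ` of nonzero length with `d(γ) = r(γ)`. -/
def Circuit (S : SelfSimGraph G V Ed) (γ : Pth V Ed) : Prop :=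
  WFP S γ ∧ 1 ≤ lenP γ ∧ srcP S γ = rngP S γ

/-- A `G`-circuit: a pair `(g,γ)` with `γ` of nonzero length and `d(γ) = g·r(γ)`. -/
def GCircuit (S : SelfSimGraph G V Ed) (g : G) (γ : Pth V Ed) : Prop :=
  WFP S γ ∧ 1 ≤ lenP γ ∧ srcP S γ = S.actV g (rngP S γ)

/-- `g` is slack at `x` if all sufficiently long paths with range `x` are
strongly fixed by `g`. -/
def SlackAt (S : SelfSimGraph G V Ed) (g : G) (x : V) : Prop :=
  ∃ n : ℕ, ∀ γ, WFP S γ → rngP S γ = x → n ≤ lenP γ → StronglyFixed S g γ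

/-- The sequence `(γⁿ, gₙ)` attached to a `G`-circuit `(g, γ)`:
`γ¹ = γ`, `g₁ = g`, `γⁿ⁺¹ = gₙ·γⁿ`, `gₙ₊₁ = φ(gₙ, γⁿ)` (indexed from `0`). -/
def circIter (S : SelfSimGraph G V Ed) (g : G) (γ : Pth V Ed) : ℕ → Pth V Ed × G
  | 0 => (γ, g)
  | n + 1 =>
      (actP S (circIter S g γ n).2 (circIter S g γ n).1,
       phiP S (circIter S g γ n).2 (circIter S g γ n).1)

/-- The finite concatenation `γ¹γ²⋯γⁿ`. -/
def circConcat (S : SelfSimGraph G V Ed) (g : G) (γ : Pth V Ed) : ℕ → Pth V Ed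
  | 0 => Pth.nil (rngP S γ)
  | n + 1 => compP (circConcat S g γ n) (circIter S g γ n).1

/-- `ξ` is the infinite concatenation `ξ(g,γ) = γ¹γ²γ³⋯`: it is an infinite path
whose initial segments are the finite concatenations `γ¹⋯γⁿ`. -/
def IsCircPath (S : SelfSimGraph G V Ed) (g : G) (γ : Pth V Ed) (ξ : ℕ → Ed) : Prop :=
  InfWF S ξ ∧ ∀ n, takeP S ξ (lenP (circConcat S g γ n)) = circConcat S g γ n

/-- `x ⇀ y`: there is a finite path with source `x` and range `y`. -/
def RelPath (S : SelfSimGraph G V Ed) (x y : V) : Prop :=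
  ∃ α, WFP S α ∧ srcP S α = x ∧ rngP S α = y

/-- `x ∼ y`: `x` and `y` are in the same `G`-orbit. -/
def RelOrb (S : SelfSimGraph G V Ed) (x y : V) : Prop :=
  ∃ g : G, S.actV g x = y

/-- `x ≫ y`: there is a vertex `u` with `x ⇀ u ∼ y`. -/
def RelGG (S : SelfSimGraph G V Ed) (x y : V) : Prop :=
  ∃ u, RelPath S x u ∧ RelOrb S u y

/-- A nonzero element `(α, g, β)` of `S_{G,E}`: `α, β ∈ E*`, `g ∈ G`, with
`d(α) = g·d(β)`. -/
def SGETriple (S : SelfSimGraph G V Ed) : Type :=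
  {t : Pth V Ed × G × Pth V Ed //
    WFP S t.1 ∧ WFP S t.2.2 ∧ srcP S t.1 = S.actV t.2.1 (srcP S t.2.2)}

/-- The inverse semigroup `S_{G,E}` (as a set): the triples together with `0 = none`. -/
def SGE (S : SelfSimGraph G V Ed) : Type := Option (SGETriple S)

/-- Forget the membership proofs. -/
def sgeToRaw (S : SelfSimGraph G V Ed) : SGE S → Option (Pth V Ed × G × Pth V Ed) :=
  Option.map Subtype.val

/-- The adjoint: `(α, g, β)* = (β, g⁻¹, α)`, `0* = 0`. -/
def starSGE (S : SelfSimGraph G V Ed) : SGE S → SGE S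
  | none => none
  | some s =>
      some ⟨(s.1.2.2, s.1.2.1⁻¹, s.1.1),
        ⟨s.2.2.1, s.2.1, by
          rw [s.2.2.2, ← S.actV_mul, inv_mul_cancel, S.actV_one]⟩⟩

/-- The idempotent `f_α = (α, 1, α)`. -/
def fIdem (S : SelfSimGraph G V Ed) (α : Pth V Ed) (h : WFP S α) : SGE S :=
  some ⟨(α, 1, α), ⟨h, h, by rw [S.actV_one]⟩⟩

/-- Specification of the multiplication of `S_{G,E}`:
`0` is absorbing; `(α,g,β)(γ,h,δ) = (α(g·ε), φ(g,ε)h, δ)` if `γ = βε`;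
`(α,g,β)(γ,h,δ) = (α, gφ(h⁻¹,ε)⁻¹, δ(h⁻¹·ε))` if `β = γε`; `0` otherwise. -/
def MulSpec (S : SelfSimGraph G V Ed) (mul : SGE S → SGE S → SGE S) : Prop :=
  (∀ t, mul none t = none) ∧
  (∀ s, mul s none = none) ∧
  (∀ (s t : SGETriple S) (ε : Pth V Ed),
     WFP S ε → rngP S ε = srcP S s.1.2.2 → t.1.1 = compP s.1.2.2 ε →
       sgeToRaw S (mul (some s) (some t)) =
         some (compP s.1.1 (actP S s.1.2.1 ε), phiP S s.1.2.1 ε * t.1.2.1, t.1.2.2)) ∧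
  (∀ (s t : SGETriple S) (ε : Pth V Ed),
     WFP S ε → rngP S ε = srcP S t.1.1 → s.1.2.2 = compP t.1.1 ε →
       sgeToRaw S (mul (some s) (some t)) =
         some (s.1.1, s.1.2.1 * (phiP S t.1.2.1⁻¹ ε)⁻¹,
               compP t.1.2.2 (actP S t.1.2.1⁻¹ ε))) ∧
  (∀ (s t : SGETriple S),
     (¬∃ ε, WFP S ε ∧ rngP S ε = srcP S s.1.2.2 ∧ t.1.1 = compP s.1.2.2 ε) →
     (¬∃ ε, WFP S ε ∧ rngP S ε = srcP S t.1.1 ∧ s.1.2.2 = compP t.1.1 ε) →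
       mul (some s) (some t) = none)

/-- Topological freeness of the standard action of `S_{G,E}` on `E^∞`: for every
nonzero `s = (α, g, β)`, every interior fixed point `ζ` of `s` satisfies `α = β`
and `ζ ∈ Z(ατ)` for some `τ` strongly fixed by `g`. -/
def TopFree (S : SelfSimGraph G V Ed) (act : G → (ℕ → Ed) → ℕ → Ed) : Prop :=
  ∀ (α : Pth V Ed) (g : G) (β : Pth V Ed),
    WFP S α → WFP S β → srcP S α = S.actV g (srcP S β) →
    ∀ ζ : InfPath S, ζ ∈ @interior (InfPath S) (infTop S) (FixSet S act α g β) →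
      α = β ∧ ∃ τ : Pth V Ed, WFP S τ ∧ rngP S τ = srcP S α ∧
        StronglyFixed S g τ ∧ InZ S (compP α τ) ζ.1

section Aux

variable (S : SelfSimGraph G V Ed)

lemma actE_inv_act (g : G) (e : Ed) : S.actE g⁻¹ (S.actE g e) = e := by
  rw [← S.actE_mul, inv_mul_cancel, S.actE_one]

lemma rngP_act (g : G) (p : Pth V Ed) :
    rngP S (actP S g p) = S.actV g (rngP S p) := by
  cases p with
  | nil x => rfl
  | cons e q => simp [actP, rngP, S.r_act]

lemma srcP_act (g : G) (p : Pth V Ed) :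
    srcP S (actP S g p) = S.actV g (srcP S p) := by
  induction p generalizing g with
  | nil x => rfl
  | cons e q ih => simp [actP, srcP, ih, S.phi_vertex]

lemma lenP_act (g : G) (p : Pth V Ed) : lenP (actP S g p) = lenP p := by
  induction p generalizing g with
  | nil x => rfl
  | cons e q ih => simp [actP, lenP, ih]

lemma WFP_act (g : G) (p : Pth V Ed) (h : WFP S p) : WFP S (actP S g p) := by
  induction p generalizing g with
  | nil x => trivial
  | cons e q ih =>
    obtain ⟨h1, h2⟩ := h
    refine ⟨?_, ih _ h2⟩
    show S.d (S.actE g e) = rngP S (actP S (S.phi g e) q)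
    rw [S.d_act, h1, rngP_act, S.phi_vertex]

lemma SimpleVtx_act (g : G) (x : V) (h : SimpleVtx S x) :
    SimpleVtx S (S.actV g x) := by
  obtain ⟨e, he, hu⟩ := h
  refine ⟨S.actE g e, show S.r (S.actE g e) = _ by rw [S.r_act, he], fun e' he' => ?_⟩
  have : S.actE g⁻¹ e' = e := by
    apply hu
    rw [S.r_act, he', ← S.actV_mul, inv_mul_cancel, S.actV_one]
  rw [← this, ← S.actE_mul, mul_inv_cancel, S.actE_one]

lemma NoEntry_act (g : G) (p : Pth V Ed) (h : NoEntry S p) :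
    NoEntry S (actP S g p) := by
  induction p generalizing g with
  | nil x => trivial
  | cons e q ih =>
    obtain ⟨h1, h2⟩ := h
    exact ⟨by rw [S.d_act]; exact SimpleVtx_act S g _ h1, ih _ h2⟩

lemma srcP_comp (p q : Pth V Ed) : srcP S (compP p q) = srcP S q := by
  induction p with
  | nil x => rfl
  | cons e r ih => simp [compP, srcP, ih]

lemma rngP_comp (p q : Pth V Ed) (h : rngP S q = srcP S p) :
    rngP S (compP p q) = rngP S p := by
  cases p with
  | nil x => simpa [compP, rngP, srcP] using h
  | cons e r => rfl

lemma lenP_comp (p q : Pth V Ed) : lenP (compP p q) = lenP p + lenP q := by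
  induction p with
  | nil x => simp [compP, lenP]
  | cons e r ih => simp [compP, lenP, ih]; omega

lemma WFP_comp (p q : Pth V Ed) (hp : WFP S p) (hq : WFP S q)
    (h : rngP S q = srcP S p) : WFP S (compP p q) := by
  induction p with
  | nil x => exact hq
  | cons e r ih =>
    obtain ⟨h1, h2⟩ := hp
    exact ⟨by rw [h1, rngP_comp S r q h], ih h2 h⟩

lemma NoEntry_comp (p q : Pth V Ed) (hp : NoEntry S p) (hq : NoEntry S q) :
    NoEntry S (compP p q) := by
  induction p with
  | nil x => exact hq
  | cons e r ih =>
    obtain ⟨h1, h2⟩ := hp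
    exact ⟨h1, ih h2⟩

/-- The concatenation `(g^m·γ)(g^(m+1)·γ)⋯(g^(m+k)·γ)`. -/
def segP (g : G) (γ : Pth V Ed) : ℕ → ℕ → Pth V Ed
  | m, 0 => actP S (g ^ m) γ
  | m, k + 1 => compP (actP S (g ^ m) γ) (segP g γ (m + 1) k)

lemma segP_rng (g : G) (γ : Pth V Ed) (hc : srcP S γ = S.actV g (rngP S γ)) :
    ∀ k m, rngP S (segP S g γ m k) = S.actV (g ^ m) (rngP S γ) := by
  intro k
  induction k with
  | zero => intro m; rw [segP, rngP_act]
  | succ k ih =>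
    intro m
    rw [segP, rngP_comp, rngP_act]
    rw [ih, srcP_act, hc, ← S.actV_mul, pow_succ]

lemma segP_src (g : G) (γ : Pth V Ed) :
    ∀ k m, srcP S (segP S g γ m k) = S.actV (g ^ (m + k)) (srcP S γ) := by
  intro k
  induction k with
  | zero => intro m; rw [segP, srcP_act]; simp
  | succ k ih =>
    intro m
    rw [segP, srcP_comp, ih]
    ring_nf

lemma segP_wf (g : G) (γ : Pth V Ed) (hw : WFP S γ)
    (hc : srcP S γ = S.actV g (rngP S γ)) :
    ∀ k m, WFP S (segP S g γ m k) := by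
  intro k
  induction k with
  | zero => intro m; exact WFP_act S _ _ hw
  | succ k ih =>
    intro m
    refine WFP_comp S _ _ (WFP_act S _ _ hw) (ih (m + 1)) ?_
    rw [segP_rng S g γ hc, srcP_act, hc, ← S.actV_mul, pow_succ]

lemma segP_noentry (g : G) (γ : Pth V Ed) (hn : NoEntry S γ) :
    ∀ k m, NoEntry S (segP S g γ m k) := by
  intro k
  induction k with
  | zero => intro m; exact NoEntry_act S _ _ hn
  | succ k ih =>
    intro m
    exact NoEntry_comp S _ _ (NoEntry_act S _ _ hn) (ih (m + 1))

lemma segP_len (g : G) (γ : Pth V Ed) :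
    ∀ k m, lenP γ ≤ lenP (segP S g γ m k) := by
  intro k
  induction k with
  | zero => intro m; rw [segP, lenP_act]
  | succ k ih =>
    intro m
    rw [segP, lenP_comp, lenP_act]
    omega

end Aux

/-- For a self-similar graph with `E` finite and without sources, every
`G`-circuit has an entry if and only if every circuit has an entry. -/
theorem statement14 {G V Ed : Type} [Group G] [Fintype V] [Fintype Ed]
    (S : SelfSimGraph G V Ed) (hNoSources : ∀ x : V, ∃ e : Ed, S.r e = x) :
    (∀ (g : G) (γ : Pth V Ed), GCircuit S g γ → ¬NoEntry S γ) ↔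
      (∀ γ : Pth V Ed, Circuit S γ → ¬NoEntry S γ) := by
  constructor
  · intro h γ hγ
    exact h 1 γ ⟨hγ.1, hγ.2.1, by rw [hγ.2.2, S.actV_one]⟩
  · intro h g γ hγ hn
    obtain ⟨hw, hl, hc⟩ := hγ
    -- pigeonhole on the vertices `g^n · r(γ)`
    obtain ⟨a, b, hne, hab⟩ :=
      Finite.exists_ne_map_eq_of_infinite (fun n : ℕ => S.actV (g ^ n) (rngP S γ))
    rcases Nat.lt_or_ge a b with hlt | hge
    case inl =>
      obtain ⟨k, hk⟩ : ∃ k, b = a + k + 1 := ⟨b - a - 1, by omega⟩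
      refine h (segP S g γ a k) ⟨segP_wf S g γ hw hc k a, ?_, ?_⟩
        (segP_noentry S g γ hn k a)
      · have := segP_len S g γ k a; omega
      · rw [segP_src, segP_rng S g γ hc, hc, ← S.actV_mul, ← pow_succ, ← hk]
        exact hab.symm
    case inr =>
      have hlt : b < a := lt_of_le_of_ne hge (fun e => hne e.symm)
      obtain ⟨k, hk⟩ : ∃ k, a = b + k + 1 := ⟨a - b - 1, by omega⟩
      refine h (segP S g γ b k) ⟨segP_wf S g γ hw hc k b, ?_, ?_⟩
        (segP_noentry S g γ hn k b)
      · have := segP_len S g γ k b; omega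
      · rw [segP_src, segP_rng S g γ hc, hc, ← S.actV_mul, ← pow_succ, ← hk]
        exact hab
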